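/- For the Koebe function k(z) = z/(1−z)², and any distinct ζ, u in the unit disk, the inequality |((ζ−u)² k'(ζ) k'(u))/((k(u)−k(ζ))²) − 1| < 1 is equivalent to |(u−ζ)/(1−uζ)| < 1; moreover at ζ = (√2−1)i and u = −(√2−1)i one has |(u−ζ)/(1−uζ)| = 1. -/

import Mathlib

open Complex Metric Set

/-- The class `U`: analytic on the unit disk, normalized, with
`|(z/f(z))^2 f'(z) - 1| < 1` on the disk (stated for `z ≠ 0`,
which handles the removable singularity at the origin). -/
def inU (f : ℂ → ℂ) : Prop :=
  DifferentiableOn ℂ f (ball (0:ℂ) 1) ∧ f 0 = 0 ∧ deriv f 0 = 1 ∧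
    ∀ z ∈ ball (0:ℂ) 1, z ≠ 0 →
      ‖((z / f z) ^ 2 * deriv f z - 1)‖ < 1

lemma koebe_deriv (z : ℂ) (hz : (1 : ℂ) - z ≠ 0) :
    deriv (fun z : ℂ => z / (1 - z) ^ 2) z = (1 + z) / (1 - z) ^ 3 := by
  have h1 : HasDerivAt (fun z : ℂ => z) 1 z := hasDerivAt_id z
  have h2 : HasDerivAt (fun z : ℂ => (1 - z) ^ 2) (-(2 * (1 - z))) z := by
    have : HasDerivAt (fun z : ℂ => 1 - z) (-1) z := by
      exact (hasDerivAt_id' z).const_sub (1:ℂ)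
    have := this.pow 2
    simpa [mul_comm, mul_assoc, mul_left_comm, Pi.pow_def] using this
  have h := h1.fun_div h2 (pow_ne_zero 2 hz)
  rw [h.deriv]
  field_simp
  ring

theorem stmt12 :
    (∀ ζ ∈ ball (0:ℂ) 1, ∀ u ∈ ball (0:ℂ) 1, ζ ≠ u →
      (‖((ζ - u) ^ 2 * deriv (fun z : ℂ => z / (1 - z) ^ 2) ζ *
          deriv (fun z : ℂ => z / (1 - z) ^ 2) u /
          ((fun z : ℂ => z / (1 - z) ^ 2) u - (fun z : ℂ => z / (1 - z) ^ 2) ζ) ^ 2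
          - 1)‖ < 1
        ↔ ‖((u - ζ) / (1 - u * ζ))‖ < 1)) ∧
    ‖
      (((-(((Real.sqrt 2 - 1 : ℝ) : ℂ) * Complex.I)) - ((Real.sqrt 2 - 1 : ℝ) : ℂ) * Complex.I) /
        (1 - (-(((Real.sqrt 2 - 1 : ℝ) : ℂ) * Complex.I)) * (((Real.sqrt 2 - 1 : ℝ) : ℂ) * Complex.I)))‖ = 1 := by
  constructor
  · intro ζ hζ u hu hne
    simp only [mem_ball, dist_zero_right] at hζ hu
    have hζ1 : (1 : ℂ) - ζ ≠ 0 := by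
      intro h
      have : ζ = 1 := by linear_combination -h
      simp [this] at hζ
    have hu1 : (1 : ℂ) - u ≠ 0 := by
      intro h
      have : u = 1 := by linear_combination -h
      simp [this] at hu
    have huζ : (1 : ℂ) - u * ζ ≠ 0 := by
      intro h
      have h1 : ‖u * ζ‖ = 1 := by
        have : u * ζ = 1 := by linear_combination -h
        simp [this]
      rw [norm_mul] at h1
      nlinarith [norm_nonneg u, norm_nonneg ζ]
    have hsub : u - ζ ≠ 0 := sub_ne_zero.mpr (Ne.symm hne)
    have hfac : (fun z : ℂ => z / (1 - z) ^ 2) u - (fun z : ℂ => z / (1 - z) ^ 2) ζ =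
        (u - ζ) * (1 - u * ζ) / ((1 - u) ^ 2 * (1 - ζ) ^ 2) := by
      simp only
      field_simp
      ring
    have hden : (fun z : ℂ => z / (1 - z) ^ 2) u - (fun z : ℂ => z / (1 - z) ^ 2) ζ ≠ 0 := by
      rw [hfac]
      exact div_ne_zero (mul_ne_zero hsub huζ)
        (mul_ne_zero (pow_ne_zero 2 hu1) (pow_ne_zero 2 hζ1))
    have key : (ζ - u) ^ 2 * deriv (fun z : ℂ => z / (1 - z) ^ 2) ζ *
          deriv (fun z : ℂ => z / (1 - z) ^ 2) u /
          ((fun z : ℂ => z / (1 - z) ^ 2) u - (fun z : ℂ => z / (1 - z) ^ 2) ζ) ^ 2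
          - 1 = -((u - ζ) / (1 - u * ζ)) ^ 2 := by
      rw [koebe_deriv ζ hζ1, koebe_deriv u hu1, hfac]
      field_simp [show (1:ℂ) - ζ * u ≠ 0 by rwa [mul_comm]]
      ring
    rw [key]
    rw [norm_neg, norm_pow]
    constructor
    · intro h
      nlinarith [norm_nonneg ((u - ζ) / (1 - u * ζ))]
    · intro h
      nlinarith [norm_nonneg ((u - ζ) / (1 - u * ζ))]
  · have hs2 : (Real.sqrt 2 : ℝ) ^ 2 = 2 := Real.sq_sqrt (by norm_num)
    have hs1 : (1 : ℝ) < Real.sqrt 2 := by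
      nlinarith [Real.sqrt_nonneg 2]
    set c : ℂ := ((Real.sqrt 2 - 1 : ℝ) : ℂ) with hc
    have hcne : c ≠ 0 := by
      rw [hc]
      norm_cast
      intro h
      rw [sub_eq_zero] at h
      linarith
    have hcsq : c ^ 2 = 3 - 2 * ((Real.sqrt 2 : ℝ) : ℂ) := by
      rw [hc]
      push_cast
      have : ((Real.sqrt 2 : ℝ) : ℂ) ^ 2 = 2 := by
        norm_cast
      linear_combination this
    have hval : ((-(c * Complex.I)) - c * Complex.I) /
        (1 - (-(c * Complex.I)) * (c * Complex.I)) = -Complex.I := by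
      have hdenom : (1 : ℂ) - (-(c * Complex.I)) * (c * Complex.I) = 2 * c := by
        have h1 : (1 : ℂ) - (-(c * Complex.I)) * (c * Complex.I) = 1 - c ^ 2 := by
          linear_combination c ^ 2 * Complex.I_sq
        rw [h1, hcsq, hc]
        push_cast
        ring
      rw [hdenom]
      rw [div_eq_iff (by exact mul_ne_zero two_ne_zero hcne)]
      ring
    rw [hval]
    simp
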